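/- Let α₁,…,α_N be i.i.d. nonnegative random variables each with density p(x) = (2M·sin(π/M)/√π)·e^{−sin²(π/M)x²}·Q(√2·cos(π/M)·x) on x ≥ 0 (and 0 for x < 0), where M ≥ 2 is an integer. Then for each n ≤ N the density of S_n = α₁ + ⋯ + α_n satisfies p_{S_n}(x) ≤ (Mⁿ·sin(π/M)/√(nπ))·exp(−(1/n)·sin²(π/M)·x²) for all x ≥ 0. -/

import Mathlib

/-!
On `[0, ∞)` we have `Q ≤ 1/2`, so the density of each `αᵢ` is at most `M` times the centred
normal density of variance `v = 1 / (2 sin²(π/M))`. The density of a sum of independent variables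
is the convolution of their densities, convolution of nonnegative functions is monotone, and
centred normal densities convolve by adding variances. Hence the density of `Sₙ` is at most
`Mⁿ` times the normal density of variance `n v`, which is exactly the stated bound.
-/

open MeasureTheory ProbabilityTheory Real Set Finset
open scoped ENNReal NNReal

/-- The Gaussian tail function `Q(x) = (1/√(2π)) ∫_x^∞ e^{-t²/2} dt`. -/
noncomputable def gaussQ (x : ℝ) : ℝ :=
  (Real.sqrt (2 * Real.pi))⁻¹ * ∫ t in Set.Ioi x, Real.exp (-t ^ 2 / 2)

/-- The joint density of `(X, X + Y)` for independent normal `X`, `Y`, factored as the density of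
`X + Y` times the conditional density of `X` given `X + Y = x`. -/
lemma gaussianPDFReal_mul_gaussianPDFReal_sub {μ ν : ℝ} {v w : ℝ≥0} (hv : v ≠ 0) (hw : w ≠ 0)
    (x t : ℝ) :
    gaussianPDFReal μ v t * gaussianPDFReal ν w (x - t) =
      gaussianPDFReal (μ + ν) (v + w) x *
        gaussianPDFReal (μ + v / (v + w) * (x - μ - ν)) (v * w / (v + w)) t := by
  have hv' : (0 : ℝ) < v := by positivity
  have hw' : (0 : ℝ) < w := by positivity
  simp only [gaussianPDFReal_def]
  push_cast
  have hconst : (√(2 * π * v))⁻¹ * (√(2 * π * w))⁻¹ =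
      (√(2 * π * (v + w)))⁻¹ * (√(2 * π * (v * w / (v + w))))⁻¹ := by
    rw [← mul_inv, ← mul_inv, ← Real.sqrt_mul (by positivity), ← Real.sqrt_mul (by positivity)]
    congr 2
    field_simp
  rw [mul_mul_mul_comm, hconst, ← exp_add, mul_mul_mul_comm (√(2 * π * (v + w)))⁻¹, ← exp_add]
  congr 2
  field_simp
  ring

lemma gaussianPDF_lconvolution_gaussianPDF {μ ν : ℝ} {v w : ℝ≥0} (hv : v ≠ 0) (hw : w ≠ 0) :
    gaussianPDF μ v ⋆ₗ gaussianPDF ν w = gaussianPDF (μ + ν) (v + w) := by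
  ext x
  have hvw : v * w / (v + w) ≠ 0 := by positivity
  have hfactor (t : ℝ) : gaussianPDF μ v t * gaussianPDF ν w (x - t) =
      gaussianPDF (μ + ν) (v + w) x *
        gaussianPDF (μ + v / (v + w) * (x - μ - ν)) (v * w / (v + w)) t := by
    simp only [gaussianPDF, ← ENNReal.ofReal_mul (gaussianPDFReal_nonneg _ _ _),
      gaussianPDFReal_mul_gaussianPDFReal_sub hv hw]
  simp_rw [lconvolution_def, neg_add_eq_sub, hfactor]
  rw [lintegral_const_mul _ (measurable_gaussianPDF _ _), lintegral_gaussianPDF_eq_one _ hvw,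
    mul_one]

lemma lconvolution_le_mul_gaussianPDF {f g : ℝ → ℝ≥0∞} {C D : ℝ≥0∞} {μ ν : ℝ} {v w : ℝ≥0}
    (hv : v ≠ 0) (hw : w ≠ 0) (hf : ∀ x, f x ≤ C * gaussianPDF μ v x)
    (hg : ∀ x, g x ≤ D * gaussianPDF ν w x) (x : ℝ) :
    (f ⋆ₗ g) x ≤ C * D * gaussianPDF (μ + ν) (v + w) x :=
  calc (f ⋆ₗ g) x
      ≤ ∫⁻ t, C * gaussianPDF μ v t * (D * gaussianPDF ν w (-t + x)) :=
        lintegral_mono fun t => mul_le_mul' (hf t) (hg _)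
    _ = C * D * (gaussianPDF μ v ⋆ₗ gaussianPDF ν w) x := by
        rw [lconvolution_def, ← lintegral_const_mul _ (by fun_prop)]
        congr 1 with t
        ring
    _ = C * D * gaussianPDF (μ + ν) (v + w) x := by
        rw [gaussianPDF_lconvolution_gaussianPDF hv hw]

lemma ProbabilityTheory.IndepFun.map_add_eq_withDensity_lconvolution {Ω G : Type*}
    [MeasurableSpace Ω] {P : Measure Ω} [IsFiniteMeasure P] [AddGroup G] [MeasurableSpace G]
    [MeasurableAdd₂ G] [MeasurableNeg G] {μ : Measure G} [SFinite μ] [μ.IsAddLeftInvariant]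
    {X Y : Ω → G} {f g : G → ℝ≥0∞} (hX : Measurable X) (hY : Measurable Y) (hXY : IndepFun X Y P)
    (hf : Measurable f) (hg : Measurable g) (hXf : P.map X = μ.withDensity f)
    (hYg : P.map Y = μ.withDensity g) :
    P.map (X + Y) = μ.withDensity (f ⋆ₗ[μ] g) := by
  rw [hXY.map_add_eq_map_conv_map hX hY, hXf, hYg, conv_withDensity_eq_lconvolution hf hg]

theorem ProbabilityTheory.iIndepFun.exists_density_sum_le_gaussianPDF {Ω ι : Type*}
    [MeasurableSpace Ω] {P : Measure Ω} [IsFiniteMeasure P] {X : ι → Ω → ℝ}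
    (hX : ∀ i, Measurable (X i)) (hindep : iIndepFun X P) {f : ι → ℝ → ℝ≥0∞}
    (hf : ∀ i, Measurable (f i)) (hlaw : ∀ i, P.map (X i) = volume.withDensity (f i))
    {C : ι → ℝ≥0∞} {μ : ι → ℝ} {v : ι → ℝ≥0} (hv : ∀ i, v i ≠ 0)
    (hbound : ∀ i x, f i x ≤ C i * gaussianPDF (μ i) (v i) x) {s : Finset ι} (hs : s.Nonempty) :
    ∃ g : ℝ → ℝ≥0∞, Measurable g ∧ P.map (∑ i ∈ s, X i) = volume.withDensity g ∧
      ∀ x, g x ≤ (∏ i ∈ s, C i) * gaussianPDF (∑ i ∈ s, μ i) (∑ i ∈ s, v i) x := by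
  induction hs using Finset.Nonempty.cons_induction with
  | singleton i => exact ⟨f i, hf i, by simpa using hlaw i, by simpa using hbound i⟩
  | cons i s hi hs ih =>
    obtain ⟨g, hg, hlaw_s, hbound_s⟩ := ih
    have hindep_i : IndepFun (X i) (∑ j ∈ s, X j) P :=
      (hindep.indepFun_finsetSum_of_notMem hX hi).symm
    have hv_s : ∑ j ∈ s, v j ≠ 0 :=
      (sum_pos (fun j _ => pos_iff_ne_zero.2 (hv j)) hs).ne'
    refine ⟨f i ⋆ₗ g, measurable_lconvolution _ (hf i) hg, ?_, fun x => ?_⟩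
    · rw [sum_cons]
      exact hindep_i.map_add_eq_withDensity_lconvolution (hX i)
        (by rw [sum_fn]; exact measurable_sum s fun j _ => hX j) (hf i) hg (hlaw i) hlaw_s
    · rw [prod_cons, sum_cons, sum_cons]
      exact lconvolution_le_mul_gaussianPDF (hv i) hv_s (hbound i) hbound_s x

lemma integrable_exp_neg_sq_div_two : Integrable fun t : ℝ => exp (-t ^ 2 / 2) := by
  simpa [neg_div, div_eq_inv_mul] using integrable_exp_neg_mul_sq (b := 1 / 2) (by norm_num)

lemma antitone_gaussQ : Antitone gaussQ := fun x y hxy =>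
  mul_le_mul_of_nonneg_left
    (setIntegral_mono_set integrable_exp_neg_sq_div_two.integrableOn
      (.of_forall fun _ => (exp_pos _).le) (Ioi_subset_Ioi hxy).eventuallyLE)
    (by positivity)

lemma gaussQ_zero : gaussQ 0 = 1 / 2 := by
  have hsqrt : √(2 * π) ≠ 0 := by positivity
  rw [gaussQ]
  simp_rw [neg_div, div_eq_inv_mul, ← neg_mul, integral_gaussian_Ioi]
  field_simp

@[fun_prop]
lemma measurable_gaussQ : Measurable gaussQ :=
  antitone_gaussQ.measurable

lemma gaussQ_le_half {x : ℝ} (hx : 0 ≤ x) : gaussQ x ≤ 1 / 2 :=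
  gaussQ_zero ▸ antitone_gaussQ hx

noncomputable def alphaDensity (M : ℕ) (x : ℝ) : ℝ :=
  if 0 ≤ x then
    2 * M * sin (π / M) / √π * exp (-(sin (π / M) ^ 2) * x ^ 2) *
      gaussQ (√2 * cos (π / M) * x)
  else 0

lemma measurable_alphaDensity (M : ℕ) : Measurable (alphaDensity M) :=
  Measurable.ite measurableSet_Ici (by fun_prop) measurable_const

lemma gaussianPDFReal_natCast_mul {s : ℝ} (hs : 0 < s) {v : ℝ≥0} (hv : 2 * s ^ 2 * v = 1)
    {n : ℕ} (hn : n ≠ 0) (x : ℝ) :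
    gaussianPDFReal 0 (n * v) x = s / √(n * π) * exp (-(1 / n) * s ^ 2 * x ^ 2) := by
  have hv' : (v : ℝ) = (2 * s ^ 2)⁻¹ := eq_inv_of_mul_eq_one_right hv
  have hn' : (0 : ℝ) < n := by positivity
  rw [gaussianPDFReal_def]
  push_cast
  have hvar : 2 * π * (n * (2 * s ^ 2)⁻¹) = (√(n * π) / s) ^ 2 := by
    rw [div_pow, sq_sqrt (by positivity)]
    field_simp
  rw [hv', hvar, sqrt_sq (by positivity), inv_div]
  congr 2
  field_simp
  ring

lemma sin_pi_div_natCast_pos {M : ℕ} (hM : 2 ≤ M) : 0 < sin (π / M) := by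
  have hM' : (2 : ℝ) ≤ M := by exact_mod_cast hM
  refine sin_pos_of_pos_of_lt_pi (by positivity) ?_
  exact div_lt_self pi_pos (by linarith)

lemma alphaDensity_le {M : ℕ} (hM : 2 ≤ M) {v : ℝ≥0} (hv : 2 * sin (π / M) ^ 2 * v = 1)
    (x : ℝ) : alphaDensity M x ≤ M * gaussianPDFReal 0 v x := by
  have hsin := sin_pi_div_natCast_pos hM
  have hθ : π / M ≤ π / 2 := div_le_div_of_nonneg_left pi_pos.le two_pos (by exact_mod_cast hM)
  have hcos : 0 ≤ cos (π / M) :=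
    cos_nonneg_of_mem_Icc ⟨(neg_nonpos.2 (by positivity)).trans (by positivity), hθ⟩
  have hgauss := gaussianPDFReal_natCast_mul hsin (n := 1) (by simpa using hv) one_ne_zero x
  simp only [Nat.cast_one, one_mul, div_one, neg_one_mul] at hgauss
  rw [alphaDensity, hgauss]
  split_ifs with hx
  · calc _ ≤ 2 * M * sin (π / M) / √π * exp (-(sin (π / M) ^ 2) * x ^ 2) * (1 / 2) := by
          gcongr
          exact gaussQ_le_half (by positivity)
      _ = _ := by ring
  · positivity

theorem sum_density_bound_general {Ω : Type*} [MeasureSpace Ω]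
    [IsProbabilityMeasure (ℙ : Measure Ω)]
    (M N : ℕ) (hM : 2 ≤ M)
    (α : Fin N → Ω → ℝ) (hmα : ∀ i, Measurable (α i))
    (hindep : iIndepFun α ℙ)
    (hdist : ∀ i, Measure.map (α i) ℙ = volume.withDensity (fun x =>
      ENNReal.ofReal (if 0 ≤ x then
        2 * M * Real.sin (Real.pi / M) / Real.sqrt Real.pi *
          Real.exp (-(Real.sin (Real.pi / M) ^ 2) * x ^ 2) *
          gaussQ (Real.sqrt 2 * Real.cos (Real.pi / M) * x)
      else 0))) :
    ∀ n : ℕ, 1 ≤ n → n ≤ N →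
      ∃ f : ℝ → ℝ,
        Measure.map (fun ω => ∑ i ∈ Finset.univ.filter (fun i : Fin N => (i : ℕ) < n), α i ω) ℙ =
          volume.withDensity (fun x => ENNReal.ofReal (f x)) ∧
        ∀ x : ℝ, 0 ≤ x →
          f x ≤ (M : ℝ) ^ n * Real.sin (Real.pi / M) / Real.sqrt (n * Real.pi) *
            Real.exp (-(1 / n) * Real.sin (Real.pi / M) ^ 2 * x ^ 2) := by
  intro n hn hnN
  have hsin := sin_pi_div_natCast_pos hM
  obtain ⟨v, hv⟩ : ∃ v : ℝ≥0, 2 * sin (π / M) ^ 2 * v = 1 :=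
    ⟨⟨(2 * sin (π / M) ^ 2)⁻¹, by positivity⟩, mul_inv_cancel₀ (by positivity)⟩
  have hv₀ : v ≠ 0 := by rintro rfl; simp at hv
  set s := univ.filter fun i : Fin N => (i : ℕ) < n
  have hs : s.Nonempty := ⟨⟨0, by omega⟩, mem_filter.2 ⟨mem_univ _, hn⟩⟩
  have hcard : #s = n := by simp [s, Fin.card_filter_val_lt, hnN]
  obtain ⟨g, -, hlaw, hg⟩ := hindep.exists_density_sum_le_gaussianPDF hmα
    (fun _ => (measurable_alphaDensity M).ennreal_ofReal) hdist (fun _ => hv₀)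
    (fun _ x => by simpa [gaussianPDF, ENNReal.ofReal_mul] using
      ENNReal.ofReal_le_ofReal (alphaDensity_le hM hv x)) hs
  simp only [prod_const, sum_const, hcard, smul_zero, nsmul_eq_mul] at hg
  have hg_ne_top (x : ℝ) : g x ≠ ⊤ :=
    ne_top_of_le_ne_top (ENNReal.mul_ne_top (by simp) gaussianPDF_ne_top) (hg x)
  refine ⟨fun x => (g x).toReal, ?_, fun x _ => ?_⟩
  · simp_rw [← Finset.sum_apply, hlaw, ENNReal.ofReal_toReal (hg_ne_top _)]
  · rw [mul_div_assoc, mul_assoc, ← gaussianPDFReal_natCast_mul hsin hv (by omega)]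
    refine ENNReal.toReal_le_of_le_ofReal
      (mul_nonneg (by positivity) (gaussianPDFReal_nonneg _ _ _)) ((hg x).trans_eq ?_)
    rw [gaussianPDF, ENNReal.ofReal_mul (by positivity), ENNReal.ofReal_pow (by positivity),
      ENNReal.ofReal_natCast]

theorem sum_density_bound {Ω : Type*} [MeasureSpace Ω]
    [IsProbabilityMeasure (ℙ : Measure Ω)]
    (M N : ℕ) (hM : 2 ≤ M) (hN : 1 ≤ N)
    (α : Fin N → Ω → ℝ) (hmα : ∀ i, Measurable (α i))
    (hindep : iIndepFun α ℙ)
    (hdist : ∀ i, Measure.map (α i) ℙ = volume.withDensity (fun x =>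
      ENNReal.ofReal (if 0 ≤ x then
        2 * M * Real.sin (Real.pi / M) / Real.sqrt Real.pi *
          Real.exp (-(Real.sin (Real.pi / M) ^ 2) * x ^ 2) *
          gaussQ (Real.sqrt 2 * Real.cos (Real.pi / M) * x)
      else 0))) :
    ∀ n : ℕ, 1 ≤ n → n ≤ N →
      ∃ f : ℝ → ℝ,
        Measure.map (fun ω => ∑ i ∈ Finset.univ.filter (fun i : Fin N => (i : ℕ) < n), α i ω) ℙ =
          volume.withDensity (fun x => ENNReal.ofReal (f x)) ∧
        ∀ x : ℝ, 0 ≤ x →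
          f x ≤ (M : ℝ) ^ n * Real.sin (Real.pi / M) / Real.sqrt (n * Real.pi) *
            Real.exp (-(1 / n) * Real.sin (Real.pi / M) ^ 2 * x ^ 2) :=
  sum_density_bound_general M N hM α hmα hindep hdist
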